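/- arXiv:2409.09703 — 7 statements merged into one kernel-verified Lean document; each statement's English description precedes it below -/
import Mathlib

section
/- Let Γ be a group and let (Φ_i)_{i≥1} be an inverse system of Γ-sets indexed by the natural numbers, with Γ-equivariant structure maps r_{i+1} : Φ_{i+1} → Φ_i. Assume each Φ_i is nonempty and each orbit set Φ_i/Γ is finite. Then the inverse limit lim_i Φ_i — the set of sequences (x_i)_{i≥1} with x_i ∈ Φ_i and r_{i+1}(x_{i+1}) = x_i for all i — is nonempty. -/
section Aux

variable {Γ : Type*} [Group Γ] {Φ : ℕ → Type*} [∀ i, MulAction Γ (Φ i)]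

/-- Composition of the transition maps: `Φ (i+n) → Φ i`. -/
def invRes (r : ∀ i, Φ (i + 1) → Φ i) (i : ℕ) : ∀ n, Φ (i + n) → Φ i
  | 0 => id
  | (n+1) => fun w => invRes r i n (r (i + n) w)

/-- Transport along an index equality. -/
def castPhi {a b : ℕ} (h : a = b) : Φ a → Φ b := fun x => h ▸ x

lemma castPhi_symm {a b : ℕ} (h : a = b) (x : Φ b) :
    castPhi h (castPhi h.symm x) = x := by subst h; rfl

lemma castPhi_r (r : ∀ i, Φ (i + 1) → Φ i) {a b : ℕ} (h : a = b) (x : Φ (a + 1)) :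
    r b (castPhi (Φ := Φ) (by rw [h]) x) = castPhi h (r a x) := by
  subst h; rfl

lemma invRes_comm (r : ∀ i, Φ (i + 1) → Φ i) (i : ℕ) :
    ∀ n (z : Φ (i + 1 + n)),
      invRes r i (n + 1) (castPhi (Φ := Φ) (Nat.add_right_comm i 1 n) z)
        = r i (invRes r (i + 1) n z)
  | 0, z => rfl
  | (n+1), z => by
      have h := invRes_comm r i n (r (i + 1 + n) z)
      show invRes r i (n + 1) (r (i + n + 1) (castPhi _ z))
          = r i (invRes r (i + 1) n (r (i + 1 + n) z))
      rw [← h]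
      congr 1
      exact castPhi_r (Φ := Φ) r (Nat.add_right_comm i 1 n) z

lemma invRes_smul (r : ∀ i, Φ (i + 1) → Φ i)
    (hequiv : ∀ (i : ℕ) (g : Γ) (x : Φ (i + 1)), r i (g • x) = g • r i x) (i : ℕ) :
    ∀ n (g : Γ) (w : Φ (i + n)), invRes r i n (g • w) = g • invRes r i n w
  | 0, g, w => rfl
  | (n+1), g, w => by
      show invRes r i n (r (i + n) (g • w)) = g • invRes r i n (r (i + n) w)
      rw [hequiv, invRes_smul r hequiv i n]

end Aux

/-- Let `Γ` be a group and `(Φ i)` an inverse system of `Γ`-sets indexed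
by the natural numbers, with `Γ`-equivariant structure maps `r i : Φ (i+1) → Φ i`.
If each `Φ i` is nonempty and each orbit set `Φ i / Γ` is finite, then the inverse limit
is nonempty: there is a sequence `x` with `x i ∈ Φ i` and `r i (x (i+1)) = x i` for all `i`. -/
theorem inverseLimit_nonempty_of_finite_orbit_sets
    {Γ : Type*} [Group Γ] (Φ : ℕ → Type*) [∀ i, MulAction Γ (Φ i)]
    (r : ∀ i, Φ (i + 1) → Φ i)
    (hequiv : ∀ (i : ℕ) (g : Γ) (x : Φ (i + 1)), r i (g • x) = g • r i x)
    (hne : ∀ i, Nonempty (Φ i))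
    (hfin : ∀ i, Finite (MulAction.orbitRel.Quotient Γ (Φ i))) :
    ∃ x : ∀ i, Φ i, ∀ i, r i (x (i + 1)) = x i := by
  classical
  -- eventual images
  set A : ∀ i, Set (Φ i) := fun i => ⋂ n, Set.range (invRes r i n) with hA
  -- the ranges are antitone in n
  have hanti : ∀ i, Antitone fun n => Set.range (invRes r i n) := by
    intro i
    refine antitone_nat_of_succ_le ?_
    rintro n x ⟨w, rfl⟩
    exact ⟨r (i + n) w, rfl⟩
  -- saturation: if the orbit of x meets the range, x is in the range
  have hsat : ∀ i n (x : Φ i),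
      (Quotient.mk (MulAction.orbitRel Γ (Φ i)) x) ∈
        (Quotient.mk (MulAction.orbitRel Γ (Φ i)) '' Set.range (invRes r i n)) →
        x ∈ Set.range (invRes r i n) := by
    rintro i n x ⟨y, ⟨w, rfl⟩, hxy⟩
    have hrel := Quotient.exact hxy
    obtain ⟨g, hg⟩ : invRes r i n w ∈ MulAction.orbit Γ x := hrel
    refine ⟨(g : Γ)⁻¹ • w, ?_⟩
    rw [invRes_smul r hequiv, ← hg]
    simp
  -- stabilization: some range is contained in all ranges
  have hstab : ∀ i, ∃ N, Set.range (invRes r i N) ⊆ A i := by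
    intro i
    haveI := hfin i
    set Q : ℕ → Set (MulAction.orbitRel.Quotient Γ (Φ i)) :=
      fun n => Quotient.mk (MulAction.orbitRel Γ (Φ i)) '' Set.range (invRes r i n) with hQ
    have hQanti : Antitone Q := fun m n h => Set.image_mono (hanti i h)
    obtain ⟨m, ⟨N, rfl⟩, hmin⟩ :=
      (IsWellFounded.wf : WellFounded ((· < ·) :
        Set (MulAction.orbitRel.Quotient Γ (Φ i)) → _ → Prop)).has_min
        (Set.range Q) ⟨Q 0, 0, rfl⟩
    have hQN : ∀ n, Q N ⊆ Q n := by
      intro n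
      have h1 : Q (max n N) ≤ Q N := hQanti (le_max_right n N)
      have h2 : Q (max n N) = Q N :=
        h1.lt_or_eq.resolve_left (hmin _ ⟨max n N, rfl⟩)
      calc Q N = Q (max n N) := h2.symm
        _ ⊆ Q n := hQanti (le_max_left n N)
    refine ⟨N, fun x hx => ?_⟩
    refine Set.mem_iInter.mpr fun n => ?_
    exact hsat i n x (hQN n ⟨x, hx, rfl⟩)
  -- A i is nonempty
  have hAne : ∀ i, ∃ x, x ∈ A i := by
    intro i
    obtain ⟨N, hN⟩ := hstab i
    obtain ⟨w⟩ := hne (i + N)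
    exact ⟨invRes r i N w, hN ⟨w, rfl⟩⟩
  -- surjectivity of r on the eventual images
  have hsurj : ∀ i (x : Φ i), x ∈ A i → ∃ y, y ∈ A (i + 1) ∧ r i y = x := by
    intro i x hx
    obtain ⟨N, hN⟩ := hstab (i + 1)
    have hx' : x ∈ Set.range (invRes r i (N + 1)) :=
      Set.mem_iInter.mp hx (N + 1)
    obtain ⟨w, hw⟩ := hx'
    set z : Φ (i + 1 + N) := castPhi (Φ := Φ) (Nat.add_right_comm i 1 N).symm w with hz
    refine ⟨invRes r (i + 1) N z, hN ⟨z, rfl⟩, ?_⟩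
    rw [← invRes_comm r i N z, hz, castPhi_symm, hw]
  -- build the sequence by recursion and choice
  have base := hAne 0
  let c : ∀ i, {x : Φ i // x ∈ A i} := fun i =>
    Nat.rec ⟨base.choose, base.choose_spec⟩
      (fun n p => ⟨(hsurj n p.1 p.2).choose, (hsurj n p.1 p.2).choose_spec.1⟩) i
  refine ⟨fun i => (c i).1, fun i => ?_⟩
  exact (hsurj i (c i).1 (c i).2).choose_spec.2
end

section
/- Let p be a prime and let P and Q be discrete p-toral groups. If every finite subgroup of P is isomorphic to a subgroup of Q, then P is isomorphic to a subgroup of Q; that is, there exists an injective group homomorphism from P to Q. -/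
/-- The image of the `p`-adic integers in `ℚ_[p]`, as an additive subgroup. -/
noncomputable def padicIntAddSubgroup (p : ℕ) [Fact p.Prime] : AddSubgroup ℚ_[p] :=
  (PadicInt.Coe.ringHom (p := p)).toAddMonoidHom.range

/-- The Prüfer `p`-group `ℤ(p^∞)`, realized as `ℚ_[p] ⧸ ℤ_[p]`. -/
abbrev ZpInfty (p : ℕ) [Fact p.Prime] : Type :=
  ℚ_[p] ⧸ padicIntAddSubgroup p

/-- The discrete `p`-torus of rank `r`. -/
abbrev DiscretePTorus (p : ℕ) [Fact p.Prime] (r : ℕ) : Type :=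
  Fin r → ZpInfty p

/-- A group `S` is discrete `p`-toral if it has a normal subgroup of finite `p`-power
index that is isomorphic to a discrete `p`-torus. -/
def IsDiscretePToral (p : ℕ) [Fact p.Prime] (S : Type*) [Group S] : Prop :=
  ∃ T : Subgroup S, T.Normal ∧ (∃ n : ℕ, T.index = p ^ n) ∧
    ∃ r : ℕ, Nonempty (T ≃* Multiplicative (DiscretePTorus p r))


/-!
`P` is countable and locally finite (a finitely generated subgroup meets the torus in a finitely
generated abelian torsion group), so it is the union of a chain `P₀ ≤ P₁ ≤ ⋯` of finite
subgroups, each of which embeds in `Q`. Let `T` be the torus of `Q`. For a finite group `G` there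
are only finitely many `T`-conjugacy classes of homomorphisms `G → Q`: the composite `G → Q ⧸ T`
takes finitely many values, and two lifts differ by a `1`-cocycle into `T`; as `H¹(G, T)` is
killed by `|G|` and `T` is divisible, conjugating by `T` moves the cocycle into the finite group
of `|G|`-torsion points. König's lemma then gives a compatible sequence of classes of embeddings
`Pₙ → Q`, compatible representatives are chosen inductively by conjugating with elements of `T`,
and their union embeds `P` in `Q`.
-/

namespace ZpInfty

variable {p : ℕ} [Fact p.Prime]

theorem mk_eq_zero_iff {x : ℚ_[p]} : (QuotientAddGroup.mk x : ZpInfty p) = 0 ↔ ‖x‖ ≤ 1 :=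
  QuotientAddGroup.eq_zero_iff x |>.trans ⟨by rintro ⟨z, rfl⟩; exact z.2, fun hx => ⟨⟨x, hx⟩, rfl⟩⟩

theorem nsmul_mk_eq_zero_iff {n : ℕ} {x : ℚ_[p]} :
    n • (QuotientAddGroup.mk x : ZpInfty p) = 0 ↔ ‖(n : ℚ_[p])‖ * ‖x‖ ≤ 1 := by
  rw [← QuotientAddGroup.mk_nsmul, mk_eq_zero_iff, nsmul_eq_mul, norm_mul]

theorem nsmul_eq_zero_of_norm_le {m n : ℕ} (h : ‖(n : ℚ_[p])‖ ≤ ‖(m : ℚ_[p])‖) {x : ZpInfty p}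
    (hx : m • x = 0) : n • x = 0 := by
  induction x using QuotientAddGroup.induction_on with
  | H q =>
    rw [nsmul_mk_eq_zero_iff] at hx ⊢
    exact (mul_le_mul_of_nonneg_right h (norm_nonneg q)).trans hx

theorem exists_pow_nsmul_eq_zero (x : ZpInfty p) : ∃ k : ℕ, p ^ k • x = 0 := by
  have hp : (1 : ℝ) < p := mod_cast (Fact.out : p.Prime).one_lt
  induction x using QuotientAddGroup.induction_on with
  | H q =>
    obtain ⟨k, hk⟩ := pow_unbounded_of_one_lt ‖q‖ hp
    refine ⟨k, nsmul_mk_eq_zero_iff.2 ?_⟩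
    rw [Nat.cast_pow, Padic.norm_p_pow, zpow_neg, zpow_natCast,
      inv_mul_le_one₀ (pow_pos (zero_lt_one.trans hp) k)]
    exact hk.le

theorem nsmul_surjective {n : ℕ} (hn : n ≠ 0) :
    Function.Surjective fun x : ZpInfty p => n • x := by
  intro x
  induction x using QuotientAddGroup.induction_on with
  | H q =>
    refine ⟨QuotientAddGroup.mk (q / n), ?_⟩
    simp only [← QuotientAddGroup.mk_nsmul, nsmul_eq_mul, mul_div_cancel₀ q (Nat.cast_ne_zero.2 hn)]

theorem exists_eq_mk_div_of_pow_nsmul_eq_zero {k : ℕ} {x : ZpInfty p} (hx : p ^ k • x = 0) :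
    ∃ n < p ^ k, x = QuotientAddGroup.mk ((n : ℚ_[p]) / (p : ℚ_[p]) ^ k) := by
  induction x using QuotientAddGroup.induction_on with | H q => ?_
  have hpk : (p : ℚ_[p]) ^ k ≠ 0 := pow_ne_zero _ (Nat.cast_ne_zero.2 (Fact.out : p.Prime).ne_zero)
  rw [← QuotientAddGroup.mk_nsmul, mk_eq_zero_iff, nsmul_eq_mul, Nat.cast_pow] at hx
  set z : ℤ_[p] := ⟨p ^ k * q, hx⟩
  obtain ⟨w, hw⟩ := Ideal.mem_span_singleton'.1 (z.appr_spec k)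
  refine ⟨z.appr k, z.appr_lt k, QuotientAddGroup.eq_iff_sub_mem.2 ⟨w, ?_⟩⟩
  have hzw : (w : ℚ_[p]) * p ^ k = p ^ k * q - z.appr k := by
    have := congrArg ((↑) : ℤ_[p] → ℚ_[p]) hw
    push_cast at this
    exact this
  show (w : ℚ_[p]) = q - _
  field_simp
  linear_combination hzw

theorem finite_pow_nsmul_eq_zero (k : ℕ) : {x : ZpInfty p | p ^ k • x = 0}.Finite := by
  refine (Set.finite_range fun n : Fin (p ^ k) =>
    (QuotientAddGroup.mk ((n : ℚ_[p]) / (p : ℚ_[p]) ^ k) : ZpInfty p)).subset fun x hx => ?_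
  obtain ⟨n, hn, rfl⟩ := exists_eq_mk_div_of_pow_nsmul_eq_zero hx
  exact ⟨⟨n, hn⟩, rfl⟩

-- The `n`-torsion lies in the `p ^ n`-torsion, as `‖p ^ n‖ < ‖n‖` in `ℚ_[p]`.
theorem finite_nsmul_eq_zero {n : ℕ} (hn : n ≠ 0) : {x : ZpInfty p | n • x = 0}.Finite := by
  have hp : p.Prime := Fact.out
  refine (finite_pow_nsmul_eq_zero n).subset fun x hx => nsmul_eq_zero_of_norm_le ?_ hx
  have hndvd : ¬ (p ^ n : ℤ) ∣ n := fun h =>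
    (Nat.lt_pow_self hp.one_lt).not_ge (Nat.le_of_dvd (Nat.pos_of_ne_zero hn) (mod_cast h))
  have := (Padic.norm_int_le_pow_iff_dvd (n : ℤ) n).not.2 hndvd
  rw [Nat.cast_pow, Padic.norm_p_pow]
  exact_mod_cast (not_le.1 this).le

end ZpInfty

namespace DiscretePTorus

variable {p : ℕ} [Fact p.Prime] {r : ℕ}

theorem isAddTorsion : IsAddTorsion (DiscretePTorus p r) := fun v =>
  IsOfFinAddOrder.pi fun i => by
    obtain ⟨k, hk⟩ := ZpInfty.exists_pow_nsmul_eq_zero (v i)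
    exact isOfFinAddOrder_iff_nsmul_eq_zero.2 ⟨p ^ k, pow_pos (Fact.out : p.Prime).pos k, hk⟩

theorem nsmul_surjective {n : ℕ} (hn : n ≠ 0) :
    Function.Surjective fun v : DiscretePTorus p r => n • v := fun v =>
  ⟨fun i => (ZpInfty.nsmul_surjective hn (v i)).choose,
    funext fun i => (ZpInfty.nsmul_surjective hn (v i)).choose_spec⟩

theorem finite_nsmul_eq_zero {n : ℕ} (hn : n ≠ 0) :
    {v : DiscretePTorus p r | n • v = 0}.Finite := by
  convert Set.Finite.pi fun _ : Fin r => ZpInfty.finite_nsmul_eq_zero (p := p) hn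
  ext v
  simp [funext_iff]

end DiscretePTorus

theorem IsDiscretePToral.exists_divisible_torsion_subgroup {p : ℕ} [Fact p.Prime] {G : Type*}
    [Group G] (hG : IsDiscretePToral p G) :
    ∃ T : Subgroup G, T.Normal ∧ T.FiniteIndex ∧ IsMulCommutative T ∧ IsMulTorsion T ∧
      (∀ n ≠ 0, Function.Surjective fun a : T => a ^ n) ∧
      ∀ n ≠ 0, {a : T | a ^ n = 1}.Finite := by
  obtain ⟨T, hT, ⟨k, hk⟩, r, ⟨e⟩⟩ := hG
  have he : Function.Injective e.toMonoidHom := e.injective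
  refine ⟨T, hT, ⟨hk ▸ pow_ne_zero _ (Fact.out : p.Prime).ne_zero⟩,
    isMulCommutative_iff.2 fun a b => e.injective (by rw [map_mul, map_mul, mul_comm]),
    fun a => he.isOfFinOrder_iff.1
      ((isOfFinOrder_ofAdd_iff (x := (e a).toAdd)).2 (DiscretePTorus.isAddTorsion _)),
    fun n hn a => ?_, fun n hn => ?_⟩
  · obtain ⟨w, hw⟩ := DiscretePTorus.nsmul_surjective hn (e a).toAdd
    refine ⟨e.symm (.ofAdd w), e.injective ?_⟩
    simp only [map_pow, e.apply_symm_apply, ← ofAdd_nsmul, hw, ofAdd_toAdd]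
  · refine ((DiscretePTorus.finite_nsmul_eq_zero hn).preimage
      (Multiplicative.toAdd.injective.comp e.injective).injOn).subset fun a (ha : a ^ n = 1) => ?_
    simp [← toAdd_pow, ← map_pow, ha]

section LocallyFinite

variable {G : Type*} [Group G]

open scoped IsMulCommutative in
theorem Subgroup.finite_of_fg_of_isMulTorsion (N : Subgroup G) [N.FiniteIndex]
    [IsMulCommutative N] (hN : IsMulTorsion N) (H : Subgroup G) [Group.FG H] : Finite H := by
  let M := N.subgroupOf H
  have : Group.FG M := Subgroup.fg_of_index_ne_zero M
  have hMN : Function.Injective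
      ((H.subtype.comp M.subtype).codRestrict N fun a => Subgroup.mem_subgroupOf.1 a.2) :=
    fun a b hab => Subtype.ext (Subtype.ext (congrArg Subtype.val hab :))
  have : Finite M := CommGroup.finite_of_fg_isMulTorsion M fun a => hMN.isOfFinOrder_iff.1 (hN _)
  exact (Subgroup.finite_iff_finite_and_finiteIndex M).2 ⟨this, inferInstance⟩

theorem countable_of_isMulTorsion (hG : IsMulTorsion G)
    (hfin : ∀ n ≠ 0, {a : G | a ^ n = 1}.Finite) : Countable G := by
  refine Set.countable_univ_iff.1 <| (Set.countable_iUnion fun n : ℕ =>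
    (hfin (n + 1) n.succ_ne_zero).countable).mono fun a _ => ?_
  obtain ⟨n, hn, ha⟩ := (hG a).exists_pow_eq_one
  exact Set.mem_iUnion.2 ⟨n - 1, by rwa [Nat.sub_add_cancel hn]⟩

theorem exists_monotone_finite_subgroups_of_countable [Countable G]
    (hG : ∀ H : Subgroup G, Group.FG H → Finite H) :
    ∃ K : ℕ → Subgroup G, Monotone K ∧ (∀ n, Finite (K n)) ∧ ∀ x, ∃ n, x ∈ K n := by
  obtain ⟨enum, henum⟩ := exists_surjective_nat G
  refine ⟨fun n => Subgroup.closure (enum '' Set.Iic n),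
    fun a b hab => Subgroup.closure_mono (Set.image_mono (Set.Iic_subset_Iic.2 hab)),
    fun n => hG _ ?_, fun x => ?_⟩
  · have : Finite (enum '' Set.Iic n) := ((Set.finite_Iic n).image enum).to_subtype
    exact Group.closure_finite_fg _
  · obtain ⟨k, rfl⟩ := henum x
    exact ⟨k, Subgroup.subset_closure ⟨k, Set.self_mem_Iic, rfl⟩⟩

end LocallyFinite

theorem IsDiscretePToral.exists_monotone_finite_subgroups {p : ℕ} [Fact p.Prime] {G : Type*}
    [Group G] (hG : IsDiscretePToral p G) :
    ∃ K : ℕ → Subgroup G, Monotone K ∧ (∀ n, Finite (K n)) ∧ ∀ x, ∃ n, x ∈ K n := by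
  obtain ⟨T, -, _, _, htors, -, hfin⟩ := hG.exists_divisible_torsion_subgroup
  have : Countable T := countable_of_isMulTorsion htors hfin
  have : Countable G := .of_equiv _ (Subgroup.groupEquivQuotientProdSubgroup (s := T)).symm
  exact exists_monotone_finite_subgroups_of_countable fun H _ =>
    T.finite_of_fg_of_isMulTorsion htors H

section HomConj

variable {Q : Type*} [Group Q] (T : Subgroup Q)

def homConjSetoid (G : Type*) [Group G] : Setoid (G →* Q) where
  r f f' := ∃ u ∈ T, ∀ g, f' g = u * f g * u⁻¹
  iseqv :=
    { refl _ := ⟨1, T.one_mem, fun _ => by group⟩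
      symm := fun ⟨u, hu, h⟩ => ⟨u⁻¹, T.inv_mem hu, fun g => by rw [h]; group⟩
      trans := fun ⟨u, hu, h⟩ ⟨v, hv, h'⟩ =>
        ⟨v * u, T.mul_mem hv hu, fun g => by rw [h', h]; group⟩ }

variable {G H : Type*} [Group G] [Group H]

def homConjComap (i : H →* G) : Quotient (homConjSetoid T G) → Quotient (homConjSetoid T H) :=
  Quotient.map (·.comp i) fun _ _ ⟨u, hu, h⟩ => ⟨u, hu, fun x => h (i x)⟩

variable {T}

theorem Function.Injective.of_homConj_eq {f f' : G →* Q}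
    (h : Quotient.mk (homConjSetoid T G) f = Quotient.mk _ f') (hf : Function.Injective f) :
    Function.Injective f' := by
  obtain ⟨u, -, hu⟩ := Quotient.exact h
  intro a b hab
  rw [hu, hu, mul_left_inj, mul_right_inj] at hab
  exact hf hab

theorem exists_comp_eq_of_homConjComap_eq (i : H →* G) {g : G →* Q} {f : H →* Q}
    (h : homConjComap T i (Quotient.mk _ g) = Quotient.mk _ f) :
    ∃ g' : G →* Q, Quotient.mk (homConjSetoid T G) g' = Quotient.mk _ g ∧ g'.comp i = f := by
  obtain ⟨u, hu, hgf⟩ := Quotient.exact h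
  refine ⟨(MulAut.conj u).toMonoidHom.comp g, Quotient.sound ⟨u⁻¹, T.inv_mem hu, fun x => ?_⟩,
    MonoidHom.ext fun x => (hgf x).symm⟩
  simp only [MonoidHom.comp_apply, MulEquiv.coe_toMonoidHom, MulAut.conj_apply]
  group

variable [T.Normal]

/- With `x = ∏ₕ t h`, the cocycle identity gives `t g ^ |G| = x * (f₀ g * x * (f₀ g)⁻¹)⁻¹`, so
conjugating by a `|G|`-th root of `x⁻¹` kills the `|G|`-th power of the cocycle. -/
open scoped IsMulCommutative in
theorem exists_conj_div_pow_card_eq_one [Finite G] [IsMulCommutative T]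
    (hdiv : Function.Surjective fun a : T => a ^ Nat.card G) {f₀ f : G →* Q}
    (hf : ∀ g, f g / f₀ g ∈ T) :
    ∃ u ∈ T, ∀ g, ∃ s : T, s ^ Nat.card G = 1 ∧ (s : Q) = u * f g * u⁻¹ / f₀ g := by
  have := Fintype.ofFinite G
  let t : G → T := fun g => ⟨f g / f₀ g, hf g⟩
  let c : G → MulAut T := fun g => MulAut.conjNormal (f₀ g)
  have cocycle : ∀ g h, t (g * h) = t g * c g (t h) := fun g h => by
    ext
    simp only [t, c, Subgroup.coe_mul, MulAut.conjNormal_apply, map_mul, div_eq_mul_inv]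
    group
  set x := ∏ h, t h
  have hx : ∀ g, t g ^ Nat.card G * c g x = x := fun g =>
    calc t g ^ Nat.card G * c g x = ∏ h, t g * c g (t h) := by
          rw [Finset.prod_mul_distrib, Finset.prod_const, map_prod, Finset.card_univ,
            Nat.card_eq_fintype_card]
      _ = ∏ h, t (g * h) := by simp only [cocycle]
      _ = x := Equiv.prod_comp (Equiv.mulLeft g) t
  obtain ⟨u, hu : u ^ Nat.card G = x⁻¹⟩ := hdiv x⁻¹
  refine ⟨u, u.2, fun g => ⟨u * t g * (c g u)⁻¹, ?_, ?_⟩⟩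
  · rw [mul_pow, mul_pow, inv_pow, ← map_pow, hu, map_inv, inv_inv, mul_assoc, hx, inv_mul_cancel]
  · simp only [t, c, Subgroup.coe_mul, Subgroup.coe_inv, MulAut.conjNormal_apply, div_eq_mul_inv]
    group

theorem finite_quotient_homConjSetoid [Finite G] [T.FiniteIndex] [IsMulCommutative T]
    (hdiv : Function.Surjective fun a : T => a ^ Nat.card G)
    (htors : {a : T | a ^ Nat.card G = 1}.Finite) : Finite (Quotient (homConjSetoid T G)) := by
  let π : (G →* Q) → G → Q ⧸ T := fun f g => f g
  let ref := Set.rangeSplitting π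
  let S : Set Q := Subtype.val '' {a : T | a ^ Nat.card G = 1}
  let N : Set (G →* Q) := ⋃ c, (fun f g => f g / ref c g) ⁻¹' Set.pi Set.univ fun _ => S
  have hN : N.Finite := Set.finite_iUnion fun c =>
    (Set.Finite.pi fun _ => htors.image _).preimage fun f _ f' _ h =>
      MonoidHom.ext fun g => div_left_injective (congrFun h g)
  have := hN.to_subtype
  refine Finite.of_surjective (fun f : N => Quotient.mk _ f.1) (Quotient.ind fun f => ?_)
  let c : Set.range π := ⟨π f, f, rfl⟩
  have hc : ∀ g, f g / ref c g ∈ T := fun g =>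
    QuotientGroup.eq_iff_div_mem.1 (congrFun (Set.apply_rangeSplitting π c) g).symm
  obtain ⟨u, hu, hs⟩ := exists_conj_div_pow_card_eq_one hdiv hc
  refine ⟨⟨(MulAut.conj u).toMonoidHom.comp f, Set.mem_iUnion.2 ⟨c, fun g _ => hs g⟩⟩,
    Quotient.sound ⟨u⁻¹, T.inv_mem hu, fun g => ?_⟩⟩
  simp only [MonoidHom.comp_apply, MulEquiv.coe_toMonoidHom, MulAut.conj_apply]
  group

end HomConj

theorem exists_compatible_seq_of_surjective {X : ℕ → Type*} [Nonempty (X 0)]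
    (ρ : ∀ n, X (n + 1) → X n) (hρ : ∀ n, Function.Surjective (ρ n)) :
    ∃ x : ∀ n, X n, ∀ n, ρ n (x (n + 1)) = x n := by
  choose σ hσ using hρ
  exact ⟨fun n => Nat.rec (Classical.arbitrary _) σ n, fun n => hσ n _⟩

theorem exists_compatible_seq_of_finite {X : ℕ → Type*} [∀ n, Finite (X n)] [∀ n, Nonempty (X n)]
    (ρ : ∀ n, X (n + 1) → X n) : ∃ x : ∀ n, X n, ∀ n, ρ n (x (n + 1)) = x n := by
  let F := CategoryTheory.Functor.ofOpSequence fun n => TypeCat.ofHom (ρ n)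
  have (n : ℕᵒᵖ) : Finite (F.obj n) := inferInstanceAs (Finite (X n.unop))
  have (n : ℕᵒᵖ) : Nonempty (F.obj n) := inferInstanceAs (Nonempty (X n.unop))
  obtain ⟨s, hs⟩ := nonempty_sections_of_finite_inverse_system F
  refine ⟨fun n => s (.op n), fun n => ?_⟩
  have := hs (CategoryTheory.homOfLE (Nat.le_add_right n 1)).op
  rwa [CategoryTheory.Functor.ofOpSequence_map_homOfLE_succ] at this

theorem exists_injective_of_compatible_seq {P Q : Type*} [Group P] [Group Q]
    {K : ℕ → Subgroup P} (hK : Monotone K) (hcover : ∀ x, ∃ n, x ∈ K n) (f : ∀ n, K n →* Q)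
    (hf : ∀ n, (f (n + 1)).comp (Subgroup.inclusion (hK n.le_succ)) = f n)
    (hinj : ∀ n, Function.Injective (f n)) : ∃ φ : P →* Q, Function.Injective φ := by
  have hcompat : ∀ {m n} (hmn : m ≤ n) (x : K m), f n (Subgroup.inclusion (hK hmn) x) = f m x := by
    intro m n hmn
    induction n, hmn using Nat.le_induction with
    | base => exact fun x => rfl
    | succ n hmn ih => exact fun x => (DFunLike.congr_fun (hf n) _).trans (ih x)
  choose N hN using hcover
  have hφ : ∀ n x (hx : x ∈ K n), f (N x) ⟨x, hN x⟩ = f n ⟨x, hx⟩ := fun n x hx =>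
    (hcompat (le_max_left (N x) n) _).symm.trans (hcompat (le_max_right (N x) n) ⟨x, hx⟩)
  refine ⟨{ toFun x := f (N x) ⟨x, hN x⟩, map_one' := ?_, map_mul' x y := ?_ }, fun x y hxy => ?_⟩
  · exact (hφ 0 1 (K 0).one_mem).trans (map_one (f 0))
  · have hx := hK (le_max_left (N x) (N y)) (hN x)
    have hy := hK (le_max_right (N x) (N y)) (hN y)
    show f _ _ = f _ _ * f _ _
    rw [hφ _ x hx, hφ _ y hy, hφ _ _ (mul_mem hx hy)]
    exact map_mul (f _) ⟨x, hx⟩ ⟨y, hy⟩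
  · have hx := hK (le_max_left (N x) (N y)) (hN x)
    have hy := hK (le_max_right (N x) (N y)) (hN y)
    replace hxy : f _ ⟨x, hx⟩ = f _ ⟨y, hy⟩ := (hφ _ x hx).symm.trans (hxy.trans (hφ _ y hy))
    exact congrArg Subtype.val (hinj _ hxy)

theorem exists_injective_of_finite_homConj {P Q : Type*} [Group P] [Group Q]
    {K : ℕ → Subgroup P} (hK : Monotone K) (hcover : ∀ x, ∃ n, x ∈ K n) (T : Subgroup Q)
    [∀ n, Finite (Quotient (homConjSetoid T (K n)))]
    (hemb : ∀ n, ∃ f : K n →* Q, Function.Injective f) :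
    ∃ φ : P →* Q, Function.Injective φ := by
  let ι (n : ℕ) := Subgroup.inclusion (hK n.le_succ)
  let X (n : ℕ) := Set.range fun f : {f : K n →* Q // Function.Injective f} =>
    Quotient.mk (homConjSetoid T (K n)) f.1
  have (n : ℕ) : Nonempty (X n) := let ⟨f, hf⟩ := hemb n; ⟨⟨_, ⟨f, hf⟩, rfl⟩⟩
  obtain ⟨c, hc⟩ := exists_compatible_seq_of_finite (X := fun n => X n) fun n =>
    Set.MapsTo.restrict (homConjComap T (ι n)) (X (n + 1)) (X n) <| by
      rintro _ ⟨f, rfl⟩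
      exact ⟨⟨_, f.2.comp (Subgroup.inclusion_injective _)⟩, rfl⟩
  let Y (n : ℕ) := {f : K n →* Q // Quotient.mk _ f = (c n).1}
  have : Nonempty (Y 0) := ⟨⟨_, (c 0).1.out_eq⟩⟩
  have hres (n : ℕ) (g : K (n + 1) →* Q) (hg : Quotient.mk _ g = (c (n + 1)).1) :
      Quotient.mk _ (g.comp (ι n)) = (c n).1 :=
    calc Quotient.mk _ (g.comp (ι n)) = homConjComap T (ι n) (Quotient.mk _ g) := rfl
      _ = (c n).1 := by rw [hg]; exact congrArg Subtype.val (hc n)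
  let ρ (n : ℕ) (g : Y (n + 1)) : Y n := ⟨g.1.comp (ι n), hres n g.1 g.2⟩
  have hρ (n : ℕ) : Function.Surjective (ρ n) := fun g => by
    obtain ⟨h, hh, hhg⟩ := exists_comp_eq_of_homConjComap_eq (ι n)
      ((hres n _ (c (n + 1)).1.out_eq).trans g.2.symm)
    exact ⟨⟨h, hh.trans (c (n + 1)).1.out_eq⟩, Subtype.ext hhg⟩
  obtain ⟨f, hf⟩ := exists_compatible_seq_of_surjective ρ hρ
  refine exists_injective_of_compatible_seq hK hcover (fun n => (f n).1)
    (fun n => congrArg Subtype.val (hf n)) fun n => ?_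
  obtain ⟨⟨g, hg⟩, hgc⟩ := (c n).2
  exact hg.of_homConj_eq (hgc.trans (f n).2.symm)

/-- If every finite subgroup of the discrete `p`-toral group `P` is
isomorphic to a subgroup of the discrete `p`-toral group `Q`, then `P` is isomorphic
to a subgroup of `Q`, i.e. there is an injective homomorphism `P →* Q`. -/
theorem discretePToral_embeds_of_finite_subgroups_embed
    (p : ℕ) [Fact p.Prime] {P Q : Type*} [Group P] [Group Q]
    (hP : IsDiscretePToral p P) (hQ : IsDiscretePToral p Q)
    (h : ∀ H : Subgroup P, Finite H → ∃ K : Subgroup Q, Nonempty (H ≃* K)) :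
    ∃ f : P →* Q, Function.Injective f := by
  obtain ⟨K, hK, hKfin, hcover⟩ := hP.exists_monotone_finite_subgroups
  obtain ⟨T, _, _, _, -, hdiv, htors⟩ := hQ.exists_divisible_torsion_subgroup
  have (n : ℕ) : Finite (Quotient (homConjSetoid T (K n))) :=
    finite_quotient_homConjSetoid (hdiv _ Nat.card_pos.ne') (htors _ Nat.card_pos.ne')
  refine exists_injective_of_finite_homConj hK hcover T fun n => ?_
  obtain ⟨L, ⟨e⟩⟩ := h (K n) (hKfin n)
  exact ⟨L.subtype.comp e.toMonoidHom, L.subtype_injective.comp e.injective⟩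
end

section
/- Fix two distinct primes p and q and an infinite discrete p-toral group S. Let H be the group algebra 𝔽_q[S] (MonoidAlgebra (ZMod q) S), regarded as an abelian group on which S acts by left translation, and let G = H ⋊ S be the corresponding semidirect product. Then G is locally finite, and every finite p-subgroup of G is conjugate in G to a subgroup of the canonical copy of S (the image of the inclusion S → G). -/
noncomputable def leftTranslationAddAut (q : ℕ) (S : Type*) [Group S] :
    S →* Multiplicative (AddAut (MonoidAlgebra (ZMod q) S)) :=
  (DistribMulAction.toAddAut (MonoidAlgebra (ZMod q) S)ˣ (MonoidAlgebra (ZMod q) S)).comp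
    (MonoidAlgebra.of (ZMod q) S).toHomUnits

noncomputable def leftTranslationMulAut (q : ℕ) (S : Type*) [Group S] :
    S →* MulAut (Multiplicative (MonoidAlgebra (ZMod q) S)) where
  toFun s := AddEquiv.toMultiplicative (Multiplicative.toAdd (leftTranslationAddAut q S s))
  map_one' := by ext x; simp only [map_one]; rfl
  map_mul' a b := by ext x; simp only [map_mul]; rfl

abbrev GroupAlgebraSemidirect (q : ℕ) (S : Type*) [Group S] : Type _ :=
  Multiplicative (MonoidAlgebra (ZMod q) S) ⋊[leftTranslationMulAut q S] S

/-!
`𝔽_q[S] ⋊ S` is an extension of the abelian group `𝔽_q[S]` of exponent `q` by `S`, and `S` is a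
finite extension of a torsion abelian group; locally finite groups are closed under extensions.
A finite `p`-subgroup `P` has order invertible in `𝔽_q`, so averaging over `P` shows
`H¹(P, 𝔽_q[S]) = 0`: the cocycle `x ↦ x.left` is a coboundary, and conjugating by its bounding
element moves `P` into `S`.
-/

theorem Subgroup.FG.map {G G' : Type*} [Group G] [Group G'] {K : Subgroup G} (h : K.FG)
    (f : G →* G') : (K.map f).FG :=
  (fg_iff_submonoid_fg _).mpr ((fg_iff_submonoid_fg K).mp h |>.map f)

def Group.IsLocallyFinite (G : Type*) [Group G] : Prop :=
  ∀ K : Subgroup G, K.FG → Finite K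

namespace Group.IsLocallyFinite

variable {G G' : Type*} [Group G] [Group G']

theorem finite [hG : Group.FG G] (h : IsLocallyFinite G) : Finite G :=
  have : Finite (⊤ : Subgroup G) := h ⊤ hG.out
  Finite.of_equiv _ Subgroup.topEquiv.toEquiv

theorem of_injective (f : G →* G') (hf : Function.Injective f) (h : IsLocallyFinite G') :
    IsLocallyFinite G := fun K hK =>
  have : Finite (K.map f) := h _ (hK.map f)
  Finite.of_equiv _ (K.equivMapOfInjective f hf).symm.toEquiv

theorem of_finite [Finite G] : IsLocallyFinite G := fun _ _ => inferInstance

theorem of_isMulTorsion {A : Type*} [CommGroup A] (h : IsMulTorsion A) : IsLocallyFinite A :=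
  fun K hK =>
  have : Group.FG K := (Group.fg_iff_subgroup_fg K).mpr hK
  CommGroup.finite_of_fg_isMulTorsion K (h.subgroup K)

theorem of_ker (f : G →* G') (hG' : IsLocallyFinite G') (hker : IsLocallyFinite f.ker) :
    IsLocallyFinite G := by
  intro K hK
  have : Group.FG K := (Group.fg_iff_subgroup_fg K).mpr hK
  set g := f.comp K.subtype
  have hrange_fin : Finite g.range := by
    rw [MonoidHom.range_comp, Subgroup.range_subtype]
    exact hG' _ (hK.map f)
  have hker_fin : Finite g.ker := by
    refine (of_injective (MonoidHom.codRestrict (K.subtype.comp g.ker.subtype) f.ker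
      fun x => x.2) ?_ hker).finite
    intro x y hxy
    have : x.1.1 = y.1.1 := congrArg (Subtype.val : f.ker → G) hxy
    exact Subtype.ext (Subtype.ext this)
  exact g.finite_iff_finite_ker_range.mpr ⟨hker_fin, hrange_fin⟩

end Group.IsLocallyFinite

theorem SemidirectProduct.isLocallyFinite {N G : Type*} [Group N] [Group G]
    {φ : G →* MulAut N} (hN : Group.IsLocallyFinite N) (hG : Group.IsLocallyFinite G) :
    Group.IsLocallyFinite (N ⋊[φ] G) := by
  refine .of_ker rightHom hG ?_
  rw [← range_inl_eq_ker_rightHom]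
  have e := MonoidHom.ofInjective (inl_injective (φ := φ))
  exact .of_injective e.symm.toMonoidHom e.symm.injective hN

theorem isAddTorsion_zpInfty (p : ℕ) [hp : Fact p.Prime] : IsAddTorsion (ZpInfty p) := by
  intro x
  induction x using QuotientAddGroup.induction_on with
  | H y =>
    obtain ⟨k, hk⟩ := pow_unbounded_of_one_lt ‖y‖ (Nat.one_lt_cast.mpr hp.out.one_lt)
    refine isOfFinAddOrder_iff_nsmul_eq_zero.mpr ⟨p ^ k, pow_pos hp.out.pos k, ?_⟩
    rw [← QuotientAddGroup.mk_nsmul, QuotientAddGroup.eq_zero_iff]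
    have hnorm : ‖(p ^ k : ℕ) • y‖ ≤ 1 := by
      rw [nsmul_eq_mul, norm_mul, Nat.cast_pow, norm_pow, Padic.norm_p, inv_pow]
      exact inv_mul_le_one_of_le₀ hk.le (by positivity)
    exact ⟨⟨_, hnorm⟩, rfl⟩

theorem isMulTorsion_discretePTorus (p : ℕ) [Fact p.Prime] (r : ℕ) :
    IsMulTorsion (Multiplicative (DiscretePTorus p r)) := fun x =>
  (isOfFinOrder_ofAdd_iff (x := x.toAdd)).mpr
    (IsOfFinAddOrder.pi fun i => isAddTorsion_zpInfty p (x.toAdd i))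

theorem IsDiscretePToral.isLocallyFinite {p : ℕ} [Fact p.Prime] {S : Type*} [Group S]
    (hS : IsDiscretePToral p S) : Group.IsLocallyFinite S := by
  obtain ⟨T, hT, ⟨n, hindex⟩, r, ⟨e⟩⟩ := hS
  have : T.FiniteIndex := ⟨by rw [hindex]; exact pow_ne_zero n (Fact.out : p.Prime).ne_zero⟩
  refine .of_ker (QuotientGroup.mk' T) .of_finite ?_
  rw [QuotientGroup.ker_mk']
  exact .of_injective e.toMonoidHom e.injective
    (.of_isMulTorsion (isMulTorsion_discretePTorus p r))

namespace SemidirectProduct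

variable {N G : Type*} [Group G]

theorem mem_range_inr_iff [Group N] {φ : G →* MulAut N} {x : N ⋊[φ] G} :
    x ∈ (inr : G →* N ⋊[φ] G).range ↔ x.left = 1 := by
  refine ⟨?_, fun h => ⟨x.right, by ext <;> simp [h]⟩⟩
  rintro ⟨g, rfl⟩
  rfl

variable [CommGroup N] {φ : G →* MulAut N}

/-- The bounding element is the `|P|`-th root of `∏ x ∈ P, x.left`. -/
theorem exists_left_eq_coboundary (P : Subgroup (N ⋊[φ] G)) [Finite P]
    (hP : Function.Bijective fun n : N => n ^ Nat.card P) :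
    ∃ c : N, ∀ x ∈ P, x.left = c * (φ x.right c)⁻¹ := by
  have := Fintype.ofFinite P
  set a : P → N := fun x => (x : N ⋊[φ] G).left
  obtain ⟨c, hc⟩ := hP.2 (∏ y, a y)
  refine ⟨c, fun x hx => hP.1 ?_⟩
  have h_cocycle (y : P) : a (⟨x, hx⟩ * y) = x.left * φ x.right (a y) := rfl
  have h_sum : ∏ y, a (⟨x, hx⟩ * y) = ∏ y, a y :=
    Fintype.prod_bijective _ (Group.mulLeft_bijective _) _ _ fun _ => rfl
  simp only [h_cocycle, Finset.prod_mul_distrib, Finset.prod_const, Finset.card_univ,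
    ← map_prod, ← hc, ← Nat.card_eq_fintype_card] at h_sum
  simp only [mul_pow, inv_pow, ← map_pow]
  exact eq_mul_inv_of_mul_eq h_sum

theorem exists_conj_map_le_range_inr (P : Subgroup (N ⋊[φ] G)) [Finite P]
    (hP : Function.Bijective fun n : N => n ^ Nat.card P) :
    ∃ g : N ⋊[φ] G, P.map (MulAut.conj g).toMonoidHom ≤ (inr : G →* N ⋊[φ] G).range := by
  obtain ⟨c, hc⟩ := exists_left_eq_coboundary P hP
  refine ⟨inl c⁻¹, Subgroup.map_le_iff_le_comap.mpr fun x hx => mem_range_inr_iff.mpr ?_⟩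
  simp [mul_left, inv_left, hc x hx]

end SemidirectProduct

theorem bijective_pow_of_natCast_ne_zero {K A : Type*} [Field K] [AddCommGroup A] [Module K A]
    {n : ℕ} (hn : (n : K) ≠ 0) : Function.Bijective fun x : Multiplicative A => x ^ n := by
  have : (fun x : Multiplicative A => x ^ n) =
      Multiplicative.ofAdd ∘ (Units.mk0 (n : K) hn • ·) ∘ Multiplicative.toAdd := by
    ext x
    simp [Units.smul_def, Nat.cast_smul_eq_nsmul]
  rw [this]
  exact Multiplicative.ofAdd.bijective.comp
    ((MulAction.bijective _).comp Multiplicative.toAdd.bijective)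

theorem groupAlgebraSemidirect_locallyFinite_and_finite_pSubgroups_conjugate_general
    (p q : ℕ) [Fact p.Prime] [Fact q.Prime] (hpq : p ≠ q)
    (S : Type*) [Group S] (hS : IsDiscretePToral p S) :
    (∀ K : Subgroup (GroupAlgebraSemidirect q S), K.FG → Finite K) ∧
    (∀ P : Subgroup (GroupAlgebraSemidirect q S), IsPGroup p P → Finite P →
      ∃ g : GroupAlgebraSemidirect q S,
        Subgroup.map (MulAut.conj g).toMonoidHom P ≤
          (SemidirectProduct.inr (φ := leftTranslationMulAut q S)).range) := by
  have hH : IsMulTorsion (Multiplicative (MonoidAlgebra (ZMod q) S)) := fun x =>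
    (isOfFinOrder_ofAdd_iff (x := x.toAdd)).mpr
      (IsAddTorsion.module_of_finite (ZMod q) (MonoidAlgebra (ZMod q) S) x.toAdd)
  refine ⟨SemidirectProduct.isLocallyFinite (.of_isMulTorsion hH) hS.isLocallyFinite,
    fun P hP hfin => SemidirectProduct.exists_conj_map_le_range_inr P
      (bijective_pow_of_natCast_ne_zero (K := ZMod q) ?_)⟩
  obtain ⟨k, hk⟩ := hP.exists_card_eq
  rw [hk, Nat.cast_pow]
  refine pow_ne_zero k fun hp => hpq ?_
  exact ((Nat.prime_dvd_prime_iff_eq Fact.out Fact.out).mp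
    ((ZMod.natCast_eq_zero_iff p q).mp hp)).symm

/-- Let `p ≠ q` be primes and `S` an infinite discrete `p`-toral
group.  Let `G = 𝔽_q[S] ⋊ S`.  Then `G` is locally finite, and every finite
`p`-subgroup of `G` is conjugate in `G` to a subgroup of the canonical copy of `S`. -/
theorem groupAlgebraSemidirect_locallyFinite_and_finite_pSubgroups_conjugate
    (p q : ℕ) [Fact p.Prime] [Fact q.Prime] (hpq : p ≠ q)
    (S : Type*) [Group S] (hS : IsDiscretePToral p S) (hinf : Infinite S) :
    (∀ K : Subgroup (GroupAlgebraSemidirect q S), K.FG → Finite K) ∧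
    (∀ P : Subgroup (GroupAlgebraSemidirect q S), IsPGroup p P → Finite P →
      ∃ g : GroupAlgebraSemidirect q S,
        Subgroup.map (MulAut.conj g).toMonoidHom P ≤
          (SemidirectProduct.inr (φ := leftTranslationMulAut q S)).range) :=
  groupAlgebraSemidirect_locallyFinite_and_finite_pSubgroups_conjugate_general p q hpq S hS
end

section
/- Let p be a prime and let G be a locally finite group containing a finite p-subgroup S that is maximal among the p-subgroups of G. Then there exists a finite subgroup G₀ ≤ G with S ≤ G₀ such that S is a Sylow p-subgroup of the finite group G₀ and the fusion of G on S is realized in G₀: for all subgroups P, Q ≤ S and every g ∈ G with gPg⁻¹ ≤ Q, there exists h ∈ G₀ such that hxh⁻¹ = gxg⁻¹ for every x ∈ P. -/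
/-- Let `G` be a locally finite group and `S` a finite `p`-subgroup of
`G` that is maximal among the `p`-subgroups of `G`.  Then there is a finite subgroup
`G₀ ≤ G` containing `S` such that `S` is a Sylow `p`-subgroup of `G₀` (a `p`-subgroup of
maximal order among `p`-subgroups of `G₀`) and the fusion of `G` on `S` is realized in
`G₀`. -/
theorem finite_realization_of_fusion
    (p : ℕ) [Fact p.Prime] {G : Type*} [Group G]
    (hLF : ∀ K : Subgroup G, K.FG → Finite K)
    (S : Subgroup G) (hSfin : Finite S) (hSp : IsPGroup p S)
    (hSmax : ∀ Q : Subgroup G, IsPGroup p Q → S ≤ Q → Q = S) :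
    ∃ G₀ : Subgroup G, Finite G₀ ∧ S ≤ G₀ ∧
      (∀ Q : Subgroup G, Q ≤ G₀ → IsPGroup p Q → Nat.card Q ≤ Nat.card S) ∧
      (∀ P Q : Subgroup G, P ≤ S → Q ≤ S → ∀ g : G,
        Subgroup.map (MulAut.conj g).toMonoidHom P ≤ Q →
        ∃ h ∈ G₀, ∀ x ∈ P, h * x * h⁻¹ = g * x * g⁻¹) := by
  classical
  -- index set of realizable partial conjugation maps
  set T : Set (Set ↥S × (↥S → ↥S)) :=
    {pf | ∃ g : G, ∀ x ∈ pf.1, ((pf.2 x : G)) = g * (x : G) * g⁻¹} with hT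
  have hTfin : Finite T := Subtype.finite
  let w : T → G := fun t => Classical.choose t.2
  have hw : ∀ t : T, ∀ x ∈ (t : Set ↥S × (↥S → ↥S)).1,
      (((t : Set ↥S × (↥S → ↥S)).2 x : G)) = w t * (x : G) * (w t)⁻¹ :=
    fun t => Classical.choose_spec t.2
  set gens : Set G := (S : Set G) ∪ Set.range w with hgens
  have hgfin : gens.Finite := (Set.toFinite _).union (Set.finite_range w)
  refine ⟨Subgroup.closure gens, ?_, ?_, ?_, ?_⟩
  · exact hLF _ ((Subgroup.fg_iff _).2 ⟨gens, rfl, hgfin⟩)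
  · exact fun x hx => Subgroup.subset_closure (Or.inl hx)
  · set G₀ := Subgroup.closure gens with hG₀
    have hfinG₀ : Finite G₀ := hLF _ ((Subgroup.fg_iff _).2 ⟨gens, rfl, hgfin⟩)
    have hSG₀ : S ≤ G₀ := fun x hx => Subgroup.subset_closure (Or.inl hx)
    intro Q hQ hQp
    -- move to G₀
    have hQ' : IsPGroup p (Q.subgroupOf G₀) := hQp.of_equiv (Subgroup.subgroupOfEquivOfLe hQ).symm
    obtain ⟨P₀, hP₀⟩ := hQ'.exists_le_sylow
    have hS' : IsPGroup p (S.subgroupOf G₀) := hSp.of_equiv (Subgroup.subgroupOfEquivOfLe hSG₀).symm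
    obtain ⟨P₁, hP₁⟩ := hS'.exists_le_sylow
    -- map P₁ back to G
    have hmap : IsPGroup p ((P₁ : Subgroup G₀).map G₀.subtype) :=
      (P₁.2).map _
    have hle : S ≤ (P₁ : Subgroup G₀).map G₀.subtype := by
      intro x hx
      exact ⟨⟨x, hSG₀ hx⟩, hP₁ (by simpa [Subgroup.mem_subgroupOf] using hx), rfl⟩
    have heq : (P₁ : Subgroup G₀).map G₀.subtype = S := hSmax _ hmap hle
    have hcard1 : Nat.card ((P₁ : Subgroup G₀)) = Nat.card S := by
      rw [← heq]
      exact Nat.card_congr (Subgroup.equivMapOfInjective _ _ G₀.subtype_injective).toEquiv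
    have hcQ : Nat.card Q = Nat.card (Q.subgroupOf G₀) :=
      Nat.card_congr (Subgroup.subgroupOfEquivOfLe hQ).symm.toEquiv
    have hcards : Nat.card ((P₀ : Subgroup G₀)) = Nat.card ((P₁ : Subgroup G₀)) := by
      rw [P₀.card_eq_multiplicity, P₁.card_eq_multiplicity]
    calc Nat.card Q = Nat.card (Q.subgroupOf G₀) := hcQ
      _ ≤ Nat.card ((P₀ : Subgroup G₀)) := Subgroup.card_le_of_le hP₀
      _ = Nat.card S := by rw [hcards, hcard1]
  · intro P Q hPS hQS g hconj
    have hmem : ∀ x : G, x ∈ P → g * x * g⁻¹ ∈ S := by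
      intro x hx
      apply hQS
      apply hconj
      exact ⟨x, hx, by simp⟩
    set A : Set ↥S := {x | (x : G) ∈ P} with hA
    set f : ↥S → ↥S := fun x =>
      if h : (x : G) ∈ P then ⟨g * x * g⁻¹, hmem x h⟩ else 1 with hf
    have hTmem : (A, f) ∈ T := by
      refine ⟨g, ?_⟩
      intro x hx
      have hx' : (x : G) ∈ P := hx
      simp only [hf]
      rw [dif_pos hx']
    refine ⟨w ⟨(A, f), hTmem⟩, Subgroup.subset_closure (Or.inr ⟨_, rfl⟩), ?_⟩
    intro x hx
    have hxS : x ∈ S := hPS hx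
    have := hw ⟨(A, f), hTmem⟩ ⟨x, hxS⟩ hx
    have hx' : (((⟨x, hxS⟩ : ↥S)) : G) ∈ P := hx
    have key : ((f ⟨x, hxS⟩ : ↥S) : G)
        = w ⟨(A, f), hTmem⟩ * x * (w ⟨(A, f), hTmem⟩)⁻¹ := this
    have hfx : ((f ⟨x, hxS⟩ : ↥S) : G) = g * x * g⁻¹ := by
      simp only [hf]
      rw [dif_pos hx']
    rw [hfx] at key
    exact key.symm
end

section
/- Let p be a prime, let G be a countable locally finite group, and let S ≤ G be a Sylow p-subgroup of G (a p-subgroup such that every p-subgroup of G is conjugate in G to a subgroup of S). Then there exists an increasing sequence G₁ ≤ G₂ ≤ G₃ ≤ ⋯ of finite subgroups of G with G = ⋃_{i} G_i such that S ∩ G_i is a Sylow p-subgroup of the finite group G_i for each i. Moreover, for any such sequence, S = ⋃_{i} (S ∩ G_i). -/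
open Subgroup

theorem sylow_ext (p : ℕ) [Fact p.Prime] {G : Type*} [Group G] (H : Subgroup G) [Finite H]
    (P : Subgroup G) (hPH : P ≤ H) (hP : IsPGroup p P) :
    ∃ Q : Subgroup G, P ≤ Q ∧ Q ≤ H ∧ IsPGroup p Q ∧
      ∀ R ≤ H, IsPGroup p R → Nat.card R ≤ Nat.card Q := by
  have hP' : IsPGroup p (P.subgroupOf H) := hP.of_equiv (subgroupOfEquivOfLe hPH).symm
  obtain ⟨R, hR⟩ := hP'.exists_le_sylow
  refine ⟨Subgroup.map H.subtype R, ?_, map_subtype_le _, R.isPGroup'.map _, ?_⟩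
  · have : (P.subgroupOf H).map H.subtype = P := by
      rw [subgroupOf_map_subtype, inf_eq_left.mpr hPH]
    rw [← this]
    exact Subgroup.map_mono hR
  · intro R' hR'H hR'p
    have hR'' : IsPGroup p (R'.subgroupOf H) := hR'p.of_equiv (subgroupOfEquivOfLe hR'H).symm
    obtain ⟨R₂, hR₂⟩ := hR''.exists_le_sylow
    have e1 : Nat.card R' = Nat.card (R'.subgroupOf H) :=
      Nat.card_congr (subgroupOfEquivOfLe hR'H).symm.toEquiv
    have e2 : Nat.card (R'.subgroupOf H) ≤ Nat.card (R₂ : Subgroup H) :=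
      Subgroup.card_le_of_le hR₂
    have e3 : Nat.card (R₂ : Subgroup H) = Nat.card (R : Subgroup H) := by
      rw [Sylow.card_eq_multiplicity, Sylow.card_eq_multiplicity]
    have e4 : Nat.card (R : Subgroup H) = Nat.card (Subgroup.map H.subtype R) :=
      Nat.card_congr ((R : Subgroup H).equivMapOfInjective H.subtype H.subtype_injective).toEquiv
    omega

/-- Let `G` be a countable locally finite group and `S` a Sylow
`p`-subgroup of `G` (every `p`-subgroup of `G` is conjugate into `S`).  Then there is an
increasing sequence of finite subgroups `Gs 0 ≤ Gs 1 ≤ ⋯` of `G` whose union is `G` and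
such that `S ⊓ Gs i` is a Sylow `p`-subgroup of the finite group `Gs i` for each `i`;
moreover for any such sequence, `S` is the union of the `S ⊓ Gs i`. -/
theorem sylow_union_of_countable_locallyFinite
    (p : ℕ) [Fact p.Prime] {G : Type*} [Group G] [Countable G]
    (hLF : ∀ K : Subgroup G, K.FG → Finite K)
    (S : Subgroup G) (hSp : IsPGroup p S)
    (hSsyl : ∀ Q : Subgroup G, IsPGroup p Q →
      ∃ g : G, Subgroup.map (MulAut.conj g).toMonoidHom Q ≤ S) :
    (∃ Gs : ℕ → Subgroup G, Monotone Gs ∧ (∀ i, Finite (Gs i)) ∧ (⨆ i, Gs i) = ⊤ ∧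
      ∀ i, ∀ Q : Subgroup G, Q ≤ Gs i → IsPGroup p Q →
        Nat.card Q ≤ Nat.card (S ⊓ Gs i : Subgroup G)) ∧
    (∀ Gs : ℕ → Subgroup G, Monotone Gs → (∀ i, Finite (Gs i)) → (⨆ i, Gs i) = ⊤ →
      (∀ i, ∀ Q : Subgroup G, Q ≤ Gs i → IsPGroup p Q →
        Nat.card Q ≤ Nat.card (S ⊓ Gs i : Subgroup G)) →
      (⨆ i, S ⊓ Gs i) = S) := by
  have finle : ∀ (A B : Subgroup G), Finite B → A ≤ B → Finite A := by
    intro A B hB hAB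
    exact Finite.of_injective (Set.inclusion hAB) (Set.inclusion_injective hAB)
  constructor
  · -- existence
    obtain ⟨x, hx⟩ := exists_surjective_nat G
    set H : ℕ → Subgroup G := fun n => Subgroup.closure (x '' Set.Iic n) with hH
    have Hmono : Monotone H := fun a b hab =>
      Subgroup.closure_mono (Set.image_mono (Set.Iic_subset_Iic.mpr hab))
    have Hfin : ∀ n, Finite (H n) := fun n =>
      hLF _ ((Subgroup.fg_iff _).mpr ⟨_, rfl, Set.Finite.image _ (Set.finite_Iic n)⟩)
    have Hmem : ∀ n, x n ∈ H n := fun n =>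
      Subgroup.subset_closure ⟨n, Set.mem_Iic.mpr le_rfl, rfl⟩
    have Htop : (⨆ n, H n) = ⊤ := by
      rw [eq_top_iff]
      intro y _
      obtain ⟨n, rfl⟩ := hx y
      exact Subgroup.mem_iSup_of_mem n (Hmem n)
    -- choose the step function
    have key : ∀ (n : ℕ) (P : Subgroup G), P ≤ H n → IsPGroup p P →
        ∃ Q : Subgroup G, P ≤ Q ∧ Q ≤ H (n + 1) ∧ IsPGroup p Q ∧
          ∀ R ≤ H (n + 1), IsPGroup p R → Nat.card R ≤ Nat.card Q := by
      intro n P hPH hP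
      have := Hfin (n + 1)
      exact sylow_ext p (H (n + 1)) P (hPH.trans (Hmono (Nat.le_succ n))) hP
    choose! f hf1 hf2 hf3 hf4 using key
    obtain ⟨Q0, _, hQ0H, hQ0p, hQ0max⟩ :=
      have := Hfin 0
      sylow_ext p (H 0) ⊥ bot_le IsPGroup.of_bot
    set Qs : ℕ → Subgroup G := fun n => Nat.rec Q0 (fun n prev => f n prev) n with hQs
    have inv : ∀ n, Qs n ≤ H n ∧ IsPGroup p (Qs n) ∧
        ∀ R ≤ H n, IsPGroup p R → Nat.card R ≤ Nat.card (Qs n) := by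
      intro n
      induction n with
      | zero => exact ⟨hQ0H, hQ0p, hQ0max⟩
      | succ n ih =>
        exact ⟨hf2 n (Qs n) ih.1 ih.2.1, hf3 n (Qs n) ih.1 ih.2.1, hf4 n (Qs n) ih.1 ih.2.1⟩
    have Qmono : Monotone Qs := by
      apply monotone_nat_of_le_succ
      intro n
      exact hf1 n (Qs n) (inv n).1 (inv n).2.1
    -- the union of the Qs is a p-group
    have hT : IsPGroup p (⨆ n, Qs n : Subgroup G) := by
      intro t
      have : (t : G) ∈ ⨆ n, Qs n := t.2
      rw [Subgroup.mem_iSup_of_directed Qmono.directed_le] at this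
      obtain ⟨n, hn⟩ := this
      obtain ⟨k, hk⟩ := (inv n).2.1 ⟨t, hn⟩
      refine ⟨k, ?_⟩
      have : ((⟨(t : G), hn⟩ : Qs n) : G) ^ p ^ k = 1 := by
        rw [← SubmonoidClass.coe_pow, hk]; rfl
      ext
      simpa using this
    obtain ⟨g, hg⟩ := hSsyl _ hT
    set c : G →* G := (MulAut.conj g).toMonoidHom with hc
    have hcinj : Function.Injective c := (MulAut.conj g).injective
    refine ⟨fun n => Subgroup.map c (H n), fun a b hab => Subgroup.map_mono (Hmono hab),
      fun n => Finite.of_equiv _ ((H n).equivMapOfInjective c hcinj).toEquiv, ?_, ?_⟩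
    · rw [eq_top_iff]
      intro y _
      have : g⁻¹ * y * g ∈ ⨆ n, H n := Htop ▸ Subgroup.mem_top _
      rw [Subgroup.mem_iSup_of_directed Hmono.directed_le] at this
      obtain ⟨n, hn⟩ := this
      refine Subgroup.mem_iSup_of_mem n ⟨g⁻¹ * y * g, hn, ?_⟩
      simp [hc, mul_assoc]
    · intro i Q hQ hQp
      show Nat.card Q ≤ Nat.card (S ⊓ Subgroup.map c (H i) : Subgroup G)
      have finGs : Finite (Subgroup.map c (H i)) :=
        Finite.of_equiv _ ((H i).equivMapOfInjective c hcinj).toEquiv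
      have finSG : Finite (S ⊓ Subgroup.map c (H i) : Subgroup G) :=
        finle _ _ finGs inf_le_right
      -- pull Q back
      set c' : G →* G := (MulAut.conj g⁻¹).toMonoidHom with hc'
      have hc'inj : Function.Injective c' := (MulAut.conj g⁻¹).injective
      have hQ' : Subgroup.map c' Q ≤ H i := by
        rintro - ⟨q, hq, rfl⟩
        obtain ⟨h, hh, rfl⟩ := hQ hq
        have : c' (c h) = h := by simp [hc, hc', mul_assoc]
        rw [this]
        exact hh
      have hcardQ : Nat.card Q = Nat.card (Subgroup.map c' Q) :=
        Nat.card_congr (Q.equivMapOfInjective c' hc'inj).toEquiv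
      have hle1 : Nat.card (Subgroup.map c' Q) ≤ Nat.card (Qs i) :=
        (inv i).2.2 _ hQ' (hQp.map _)
      have hcardQs : Nat.card (Qs i) = Nat.card (Subgroup.map c (Qs i)) :=
        Nat.card_congr ((Qs i).equivMapOfInjective c hcinj).toEquiv
      have hle2 : Subgroup.map c (Qs i) ≤ S ⊓ Subgroup.map c (H i) := by
        apply le_inf
        · exact le_trans (Subgroup.map_mono (le_iSup Qs i)) hg
        · exact Subgroup.map_mono (inv i).1
      have := Subgroup.card_le_of_le hle2
      omega
  · -- uniqueness of the union
    intro Gs hmono hfin htop _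
    apply le_antisymm (iSup_le fun i => inf_le_left)
    intro s hs
    have : s ∈ ⨆ i, Gs i := htop ▸ Subgroup.mem_top s
    rw [Subgroup.mem_iSup_of_directed hmono.directed_le] at this
    obtain ⟨i, hi⟩ := this
    exact Subgroup.mem_iSup_of_mem i ⟨hs, hi⟩
end

section
/- Fix a prime p and an integer m ≥ 1. Let S be a finite nonabelian p-group and let A be a normal abelian subgroup of S such that A = C_S(Ω_m(A)) and such that every element of Ω₁(A) is a p^(2m−1)-st power in A (i.e., Ω_{2m}(A) is homocyclic of exponent p^(2m)). Then A is the unique normal abelian subgroup of S satisfying the centralizer condition: any normal abelian subgroup A* of S with A* = C_S(Ω_m(A*)) equals A. -/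
private lemma powA {G : Type*} [Group G] {x z c : G} (h1 : x * z = z * (x * c))
    (hcx : c * x = x * c) (hcz : c * z = z * c) :
    ∀ n : ℕ, x * z ^ n = z ^ n * (x * c ^ n) := by
  intro n
  induction n with
  | zero => simp
  | succ n ih =>
    have hczn : c ^ n * z = z * c ^ n := (Commute.pow_left (hcz) n)
    calc x * z ^ (n + 1) = (x * z ^ n) * z := by rw [pow_succ, mul_assoc]
      _ = z ^ n * (x * (c ^ n * z)) := by rw [ih]; group
      _ = z ^ n * ((x * z) * c ^ n) := by rw [hczn]; group
      _ = z ^ n * (z * (x * (c * c ^ n))) := by rw [h1]; group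
      _ = z ^ (n + 1) * (x * c ^ (n + 1)) := by rw [pow_succ, pow_succ']; group

private lemma powB {G : Type*} [Group G] {x z c : G} (h1 : x * z = z * (x * c))
    (hcx : c * x = x * c) (hcz : c * z = z * c) :
    ∀ n : ℕ, x ^ n * z = z * (x ^ n * c ^ n) := by
  intro n
  induction n with
  | zero => simp
  | succ n ih =>
    have hcxn : c * x ^ n = x ^ n * c := (Commute.pow_right (hcx : Commute c x) n)
    calc x ^ (n + 1) * z = x * (x ^ n * z) := by rw [pow_succ']; group
      _ = x * (z * (x ^ n * c ^ n)) := by rw [ih]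
      _ = (x * z) * (x ^ n * c ^ n) := by group
      _ = z * (x * (c * x ^ n) * c ^ n) := by rw [h1]; group
      _ = z * (x ^ (n + 1) * c ^ (n + 1)) := by rw [hcxn, pow_succ', pow_succ']; group

/-- Let `S` be a finite nonabelian `p`-group, `m ≥ 1`, and `A ⊴ S`
a normal abelian subgroup with `A = C_S(Ω_m(A))` such that every element of `Ω₁(A)`
is a `p^(2m-1)`-st power in `A` (so `Ω_{2m}(A)` is homocyclic of exponent `p^(2m)`).
Then `A` is the unique normal abelian subgroup of `S` satisfying the centralizer
condition. -/
theorem unique_normal_abelian_selfCentralizing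
    (p : ℕ) [Fact p.Prime] (m : ℕ) (hm : 1 ≤ m)
    (S : Type*) [Group S] [Finite S] (hS : IsPGroup p S)
    (hna : ∃ a b : S, a * b ≠ b * a)
    (A : Subgroup S) (hAn : A.Normal) (hAab : ∀ a ∈ A, ∀ b ∈ A, a * b = b * a)
    (hcent : A = Subgroup.centralizer {a : S | a ∈ A ∧ a ^ p ^ m = 1})
    (hhomo : ∀ a ∈ A, a ^ p = 1 → ∃ b ∈ A, b ^ p ^ (2 * m - 1) = a) :
    ∀ A' : Subgroup S, A'.Normal → (∀ a ∈ A', ∀ b ∈ A', a * b = b * a) →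
      A' = Subgroup.centralizer {a : S | a ∈ A' ∧ a ^ p ^ m = 1} → A' = A := by
  -- every element of Ω_m(A) is a p^m-th power in A
  have exists_root : ∀ j, j ≤ m → ∀ y ∈ A, y ^ p ^ j = 1 → ∃ z ∈ A, z ^ p ^ m = y := by
    intro j
    induction j with
    | zero =>
      intro _ y hy h
      refine ⟨1, A.one_mem, ?_⟩
      simp only [pow_zero, pow_one] at h
      simp [h]
    | succ j ih =>
      intro hj y hy h
      have hyj : y ^ p ^ j ∈ A := A.pow_mem hy _
      have h1 : (y ^ p ^ j) ^ p = 1 := by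
        rw [← pow_mul, ← pow_succ]; exact h
      obtain ⟨b, hb, hbeq⟩ := hhomo (y ^ p ^ j) hyj h1
      have he1 : (2 * m - (j + 1)) + j = 2 * m - 1 := by omega
      have he2 : (m - (j + 1)) + m = 2 * m - (j + 1) := by omega
      set w : S := b ^ p ^ (2 * m - (j + 1)) with hw
      have hwA : w ∈ A := A.pow_mem hb _
      have hyw : y * w⁻¹ ∈ A := A.mul_mem hy (A.inv_mem hwA)
      have hcomm : Commute y w⁻¹ := by
        have := hAab y hy w⁻¹ (A.inv_mem hwA); exact this
      have hwpow : w ^ p ^ j = y ^ p ^ j := by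
        rw [hw, ← pow_mul, ← pow_add, he1, hbeq]
      have hy' : (y * w⁻¹) ^ p ^ j = 1 := by
        rw [hcomm.mul_pow, inv_pow, hwpow, mul_inv_cancel]
      obtain ⟨z', hz', hz'eq⟩ := ih (by omega) (y * w⁻¹) hyw hy'
      refine ⟨z' * b ^ p ^ (m - (j + 1)), A.mul_mem hz' (A.pow_mem hb _), ?_⟩
      have hc2 : Commute z' (b ^ p ^ (m - (j + 1))) :=
        hAab z' hz' _ (A.pow_mem hb _)
      rw [hc2.mul_pow, hz'eq, ← pow_mul, ← pow_add, he2, ← hw]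
      group
  intro A' hA'n hA'ab hcent'
  -- key commuting claim: Ω_m(A') centralizes Ω_m(A)
  have key : ∀ x ∈ A', x ^ p ^ m = 1 → ∀ y ∈ A, y ^ p ^ m = 1 → x * y = y * x := by
    intro x hx hxp y hy hyp
    obtain ⟨z, hz, hzy⟩ := exists_root m le_rfl y hy hyp
    set c : S := x⁻¹ * (z⁻¹ * x * z) with hc
    have hcA' : c ∈ A' := by
      have : z⁻¹ * x * z ∈ A' := by
        have := hA'n.conj_mem x hx z⁻¹
        simpa [mul_assoc] using this
      exact A'.mul_mem (A'.inv_mem hx) this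
    have hcA : c ∈ A := by
      have h2 : x⁻¹ * z⁻¹ * x ∈ A := by
        have := hAn.conj_mem z⁻¹ (A.inv_mem hz) x⁻¹
        simpa [mul_assoc] using this
      have h3 : (x⁻¹ * z⁻¹ * x) * z ∈ A := A.mul_mem h2 hz
      rw [hc]
      simpa [mul_assoc] using h3
    have h1 : x * z = z * (x * c) := by rw [hc]; group
    have hcx : c * x = x * c := hA'ab c hcA' x hx
    have hcz : c * z = z * c := hAab c hcA z hz
    have hcm : c ^ p ^ m = 1 := by
      have := powB h1 hcx hcz (p ^ m)
      rw [hxp] at this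
      simpa using this.symm
    have := powA h1 hcx hcz (p ^ m)
    rw [hzy, hcm] at this
    simpa using this
  -- Ω_m(A) ⊆ A'
  have hOmA : ∀ y ∈ A, y ^ p ^ m = 1 → y ∈ A' := by
    intro y hy hyp
    rw [hcent']
    rw [Subgroup.mem_centralizer_iff]
    rintro g ⟨hg, hgp⟩
    exact key g hg hgp y hy hyp
  -- A' ⊆ A
  have hA'A : A' ≤ A := by
    intro x hx
    rw [hcent, Subgroup.mem_centralizer_iff]
    rintro g ⟨hg, hgp⟩
    exact hA'ab g (hOmA g hg hgp) x hx
  -- A ⊆ A'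
  have hAA' : A ≤ A' := by
    intro x hx
    rw [hcent', Subgroup.mem_centralizer_iff]
    rintro g ⟨hg, hgp⟩
    exact hAab g (hA'A hg) x hx
  exact le_antisymm hA'A hAA'
end

section
/- Let p be a prime, r ≥ 1, and let T = (Fin r → ℚ_[p]) ⧸ (Fin r → ℤ_[p]) be the discrete p-torus of rank r, on which a finite subgroup G of GL_r(ℤ_[p]) acts via the natural matrix action on Fin r → ℚ_[p] (which preserves the lattice Fin r → ℤ_[p] and hence descends to T). Then T has a G-invariant subgroup T₀ that is infinite and a proper subgroup of T if and only if there exists a ℚ_[p]-subspace W of Fin r → ℚ_[p] with ⊥ < W < ⊤ that is invariant under the action of every element of G. -/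
/-- The lattice `Fin r → ℤ_[p]` inside `Fin r → ℚ_[p]`, as an additive subgroup. -/
noncomputable def padicLattice (p : ℕ) [Fact p.Prime] (r : ℕ) : AddSubgroup (Fin r → ℚ_[p]) :=
  AddSubgroup.pi Set.univ fun _ : Fin r => padicIntAddSubgroup p

/-- The discrete `p`-torus presented as `(Fin r → ℚ_[p]) ⧸ (Fin r → ℤ_[p])`. -/
abbrev PadicTorusQuot (p : ℕ) [Fact p.Prime] (r : ℕ) : Type :=
  (Fin r → ℚ_[p]) ⧸ padicLattice p r

/-- A matrix over `ℤ_[p]`, viewed as a matrix over `ℚ_[p]`. -/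
def matrixToPadic (p : ℕ) [Fact p.Prime] (r : ℕ) (M : Matrix (Fin r) (Fin r) ℤ_[p]) :
    Matrix (Fin r) (Fin r) ℚ_[p] :=
  M.map fun a : ℤ_[p] => (a : ℚ_[p])

/-- An element of `GL_r(ℤ_[p])` preserves the lattice, hence acts on the quotient torus
`(Fin r → ℚ_[p]) ⧸ (Fin r → ℤ_[p])` by matrix-vector multiplication. -/
noncomputable def glActOnTorus (p : ℕ) [Fact p.Prime] (r : ℕ)
    (g : Matrix.GeneralLinearGroup (Fin r) ℤ_[p]) :
    PadicTorusQuot p r →+ PadicTorusQuot p r :=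
  QuotientAddGroup.map (padicLattice p r) (padicLattice p r)
    (Matrix.mulVecLin (matrixToPadic p r (g : Matrix (Fin r) (Fin r) ℤ_[p]))).toAddMonoidHom
    (by
      intro v hv
      intro i _
      choose w hw using fun j => hv j (Set.mem_univ j)
      refine ⟨∑ j, (g : Matrix (Fin r) (Fin r) ℤ_[p]) i j * w j, ?_⟩
      simp only [map_sum, map_mul]
      simp only [LinearMap.toAddMonoidHom_coe, Matrix.mulVecLin_apply, Matrix.mulVec,
        dotProduct, matrixToPadic, Matrix.map_apply]
      refine Finset.sum_congr rfl fun j _ => ?_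
      simp only [RingHom.toAddMonoidHom_eq_coe, AddMonoidHom.coe_coe] at hw ⊢
      rw [map_mul, hw j]
      rfl)


/-!
For a subspace `W`, its image in `T = V ⧸ L` is invariant, infinite when `W ≠ 0`, and proper
when `W ≠ V`: if `W + L = V` then `W + pⁿL = V` for all `n`, so `W` is dense, hence equal to `V`.

Conversely, for an invariant subgroup `T₀` take the largest subspace `W` whose image lies in `T₀`,
i.e. the `v` whose whole line `ℚ_p v` lands in `T₀`.  It is invariant, and proper as soon as
`T₀` is. It is nonzero when `T₀` is infinite: since the `pⁿ`-torsion of `T` is finite, `T₀`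
contains elements `p⁻⁽ⁿ⁺¹⁾u` of exact order `pⁿ⁺¹` with `u ∈ L`; by compactness of `L` these `u`
accumulate at some `u ≠ 0` with `p⁻ⁿu ∈ T₀` for all `n`, and since every subgroup of the
`p`-primary group `T` is a `ℤ_p`-submodule, the whole line `ℚ_p u` lands in `T₀`.
-/

open QuotientAddGroup Metric

theorem exists_pow_nsmul_eq_zero_and_ne_zero {A : Type*} [AddMonoid A] {q n N : ℕ} {x : A}
    (hN : q ^ N • x = 0) (hn : q ^ n • x ≠ 0) :
    ∃ m, n ≤ m ∧ q ^ (m + 1) • x = 0 ∧ q ^ m • x ≠ 0 := by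
  by_contra! h
  have descend : ∀ k, q ^ (n + k) • x = 0 → q ^ n • x = 0 := by
    intro k
    induction k with
    | zero => exact id
    | succ k ih => exact fun hk => ih (h _ (by omega) hk)
  exact hn (descend N (by rw [pow_add, mul_comm, mul_nsmul, hN, nsmul_zero]))

section PadicTorus

variable {p : ℕ} [Fact p.Prime] {r : ℕ}

theorem padic_p_ne_zero : (p : ℚ_[p]) ≠ 0 :=
  Nat.cast_ne_zero.2 (Fact.out : p.Prime).ne_zero

theorem exists_norm_pow_mul_lt (R : ℝ) {ε : ℝ} (hε : 0 < ε) :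
    ∃ n : ℕ, ‖(p : ℚ_[p]) ^ n‖ * R < ε := by
  have h := ((tendsto_pow_atTop_nhds_zero_of_lt_one (norm_nonneg _)
    (Padic.norm_p_lt_one (p := p))).mul_const R)
  rw [zero_mul] at h
  simpa only [norm_pow] using (h.eventually (gt_mem_nhds hε)).exists

theorem mem_padicLattice_iff_norm_le_one {v : Fin r → ℚ_[p]} :
    v ∈ padicLattice p r ↔ ‖v‖ ≤ 1 := by
  rw [pi_norm_le_iff_of_nonneg zero_le_one, padicLattice, AddSubgroup.mem_pi]
  refine forall_congr' fun i => ⟨fun h => ?_, fun h _ => ⟨⟨v i, h⟩, rfl⟩⟩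
  obtain ⟨a, ha⟩ := h (Set.mem_univ i)
  rw [← ha]
  exact a.2

theorem exists_pow_smul_mem_padicLattice (v : Fin r → ℚ_[p]) :
    ∃ n : ℕ, (p : ℚ_[p]) ^ n • v ∈ padicLattice p r := by
  obtain ⟨n, hn⟩ := exists_norm_pow_mul_lt (p := p) ‖v‖ one_pos
  exact ⟨n, mem_padicLattice_iff_norm_le_one.2 (by rw [norm_smul]; exact hn.le)⟩

theorem eq_zero_of_forall_smul_mem_padicLattice {v : Fin r → ℚ_[p]}
    (h : ∀ c : ℚ_[p], c • v ∈ padicLattice p r) : v = 0 := by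
  by_contra hv
  have hv' : 0 < ‖v‖ := norm_pos_iff.2 hv
  obtain ⟨c, hc⟩ := NormedField.exists_lt_norm ℚ_[p] ‖v‖⁻¹
  have hcv := mem_padicLattice_iff_norm_le_one.1 (h c)
  rw [norm_smul] at hcv
  have := mul_lt_mul_of_pos_right hc hv'
  rw [inv_mul_cancel₀ hv'.ne'] at this
  linarith

theorem mk_pow_smul (n : ℕ) (v : Fin r → ℚ_[p]) :
    (mk ((p : ℚ_[p]) ^ n • v) : PadicTorusQuot p r) = p ^ n • mk v := by
  rw [← mk_nsmul, ← Nat.cast_smul_eq_nsmul ℚ_[p], Nat.cast_pow]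

theorem mk_pow_inv_smul_mem_of_succ {T₀ : AddSubgroup (PadicTorusQuot p r)} {n : ℕ}
    {u : Fin r → ℚ_[p]} (h : (mk (((p : ℚ_[p]) ^ (n + 1))⁻¹ • u) : PadicTorusQuot p r) ∈ T₀) :
    (mk (((p : ℚ_[p]) ^ n)⁻¹ • u) : PadicTorusQuot p r) ∈ T₀ := by
  have hscale : ((p : ℚ_[p]) ^ n)⁻¹ • u = (p : ℚ_[p]) ^ 1 • ((p : ℚ_[p]) ^ (n + 1))⁻¹ • u := by
    rw [smul_smul, pow_one, pow_succ', mul_inv, mul_inv_cancel_left₀ padic_p_ne_zero]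
  rw [hscale, mk_pow_smul]
  exact T₀.nsmul_mem h _

theorem isLocallyConstant_mk_smul (c : ℚ_[p]) :
    IsLocallyConstant fun v : Fin r → ℚ_[p] => (mk (c • v) : PadicTorusQuot p r) := by
  refine (IsLocallyConstant.iff_eventually_eq _).2 fun v => ?_
  have hc : 0 < ‖c‖ + 1 := by positivity
  filter_upwards [ball_mem_nhds v (inv_pos.2 hc)] with w hw
  rw [mem_ball, dist_eq_norm] at hw
  rw [eq_iff_sub_mem, ← smul_sub, mem_padicLattice_iff_norm_le_one, norm_smul]
  calc ‖c‖ * ‖w - v‖ ≤ ‖c‖ * (‖c‖ + 1)⁻¹ := by gcongr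
    _ ≤ 1 := by rw [← div_eq_mul_inv, div_le_one hc]; linarith

theorem finite_setOf_pow_nsmul_eq_zero (n : ℕ) :
    {x : PadicTorusQuot p r | p ^ n • x = 0}.Finite := by
  have : CompactSpace (closedBall (0 : Fin r → ℚ_[p]) 1) :=
    isCompact_iff_compactSpace.1 (isCompact_closedBall _ _)
  have hf : IsLocallyConstant fun u : closedBall (0 : Fin r → ℚ_[p]) 1 =>
      (mk (((p : ℚ_[p]) ^ n)⁻¹ • (u : Fin r → ℚ_[p])) : PadicTorusQuot p r) :=
    (isLocallyConstant_mk_smul _).comp_continuous continuous_subtype_val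
  refine hf.range_finite.subset fun x hx => ?_
  obtain ⟨v, rfl⟩ := mk_surjective x
  have hv : (p : ℚ_[p]) ^ n • v ∈ padicLattice p r := by
    rw [← eq_zero_iff, mk_pow_smul]
    exact hx
  refine ⟨⟨_, mem_closedBall_zero_iff.2 (mem_padicLattice_iff_norm_le_one.1 hv)⟩, ?_⟩
  simp only [smul_smul, inv_mul_cancel₀ (pow_ne_zero n padic_p_ne_zero), one_smul]

/-- Every subgroup of the `p`-primary group `T` is a `ℤ_p`-submodule. -/
theorem exists_nsmul_mk_eq_mk_smul {a : ℚ_[p]} (ha : ‖a‖ ≤ 1) (v : Fin r → ℚ_[p]) :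
    ∃ k : ℕ, (mk (a • v) : PadicTorusQuot p r) = k • mk v := by
  obtain ⟨n, hn⟩ := exists_pow_smul_mem_padicLattice v
  let b : ℤ_[p] := ⟨a, ha⟩
  refine ⟨b.appr n, ?_⟩
  have hb : ‖a - (b.appr n : ℚ_[p])‖ ≤ ‖(p : ℚ_[p]) ^ n‖ := by
    have h := (PadicInt.norm_le_pow_iff_mem_span_pow _ n).2 (PadicInt.appr_spec n b)
    rwa [PadicInt.norm_def, PadicInt.coe_sub, PadicInt.coe_natCast, ← Padic.norm_p_pow] at h
  rw [← mk_nsmul, eq_iff_sub_mem, ← Nat.cast_smul_eq_nsmul ℚ_[p], ← sub_smul,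
    mem_padicLattice_iff_norm_le_one, norm_smul]
  rw [mem_padicLattice_iff_norm_le_one, norm_smul] at hn
  exact (mul_le_mul_of_nonneg_right hb (norm_nonneg v)).trans hn

theorem glActOnTorus_mk (g : Matrix.GeneralLinearGroup (Fin r) ℤ_[p]) (v : Fin r → ℚ_[p]) :
    glActOnTorus p r g (mk v) =
      mk (Matrix.mulVec (matrixToPadic p r (g : Matrix (Fin r) (Fin r) ℤ_[p])) v) :=
  map_mk _ _ _ _ v

/-- The largest subspace whose image in the torus lies in `T₀`. -/
noncomputable def linearCore (T₀ : AddSubgroup (PadicTorusQuot p r)) :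
    Submodule ℚ_[p] (Fin r → ℚ_[p]) where
  carrier := {v | ∀ c : ℚ_[p], (mk (c • v) : PadicTorusQuot p r) ∈ T₀}
  add_mem' hv hw c := by
    rw [smul_add, mk_add]
    exact T₀.add_mem (hv c) (hw c)
  zero_mem' c := by
    rw [smul_zero, mk_zero]
    exact T₀.zero_mem
  smul_mem' d v hv c := by
    rw [smul_smul]
    exact hv _

section linearCore

variable {T₀ : AddSubgroup (PadicTorusQuot p r)}

theorem linearCore_ne_top (h : T₀ ≠ ⊤) : linearCore T₀ ≠ ⊤ := by
  contrapose! h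
  refine (AddSubgroup.eq_top_iff' T₀).2 fun x => ?_
  obtain ⟨v, rfl⟩ := mk_surjective x
  simpa using (h ▸ Submodule.mem_top : v ∈ linearCore T₀) 1

theorem mulVec_mem_linearCore {g : Matrix.GeneralLinearGroup (Fin r) ℤ_[p]}
    (hg : ∀ x ∈ T₀, glActOnTorus p r g x ∈ T₀) {v : Fin r → ℚ_[p]} (hv : v ∈ linearCore T₀) :
    Matrix.mulVec (matrixToPadic p r (g : Matrix (Fin r) (Fin r) ℤ_[p])) v ∈ linearCore T₀ :=
  fun c => by
    rw [← Matrix.mulVec_smul, ← glActOnTorus_mk]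
    exact hg _ (hv c)

theorem mem_linearCore_of_forall_mk_pow_inv_smul_mem {u : Fin r → ℚ_[p]}
    (hu : ∀ n : ℕ, (mk (((p : ℚ_[p]) ^ n)⁻¹ • u) : PadicTorusQuot p r) ∈ T₀) :
    u ∈ linearCore T₀ := by
  intro c
  obtain ⟨n, hn⟩ := exists_norm_pow_mul_lt (p := p) ‖c‖ one_pos
  have hc : c • u = ((p : ℚ_[p]) ^ n * c) • ((p : ℚ_[p]) ^ n)⁻¹ • u := by
    rw [smul_smul, mul_comm _ c, mul_assoc, mul_inv_cancel₀ (pow_ne_zero n padic_p_ne_zero),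
      mul_one]
  obtain ⟨k, hk⟩ := exists_nsmul_mk_eq_mk_smul
    (by rw [norm_mul]; exact hn.le) (((p : ℚ_[p]) ^ n)⁻¹ • u)
  rw [hc, hk]
  exact T₀.nsmul_mem (hu n) k

theorem exists_mem_padicLattice_mk_ne_zero_mk_mem
    (hinf : (T₀ : Set (PadicTorusQuot p r)).Infinite) (n : ℕ) :
    ∃ u ∈ padicLattice p r, (mk ((p : ℚ_[p])⁻¹ • u) : PadicTorusQuot p r) ≠ 0 ∧
      (mk (((p : ℚ_[p]) ^ (n + 1))⁻¹ • u) : PadicTorusQuot p r) ∈ T₀ := by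
  obtain ⟨x, hxT, hx⟩ := (hinf.sdiff (finite_setOf_pow_nsmul_eq_zero n)).nonempty
  obtain ⟨w, rfl⟩ := mk_surjective x
  obtain ⟨N, hN⟩ := exists_pow_smul_mem_padicLattice w
  obtain ⟨m, hnm, hm1, hm⟩ := exists_pow_nsmul_eq_zero_and_ne_zero
    (by rwa [← mk_pow_smul, eq_zero_iff]) hx
  refine ⟨(p : ℚ_[p]) ^ (m + 1) • w, by rwa [← eq_zero_iff, mk_pow_smul], ?_, ?_⟩
  · rwa [smul_smul, inv_mul_eq_div, pow_succ, mul_div_cancel_right₀ _ padic_p_ne_zero,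
      mk_pow_smul]
  · have hscale : ((p : ℚ_[p]) ^ (n + 1))⁻¹ * (p : ℚ_[p]) ^ (m + 1) = (p : ℚ_[p]) ^ (m - n) := by
      rw [inv_mul_eq_div, div_eq_mul_inv, ← pow_sub₀ _ padic_p_ne_zero (by omega)]
      congr 1
      omega
    rw [smul_smul, hscale, mk_pow_smul]
    exact T₀.nsmul_mem hxT _

theorem exists_ne_zero_forall_mk_pow_inv_smul_mem
    (hinf : (T₀ : Set (PadicTorusQuot p r)).Infinite) :
    ∃ u ≠ 0, ∀ n : ℕ, (mk (((p : ℚ_[p]) ^ n)⁻¹ • u) : PadicTorusQuot p r) ∈ T₀ := by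
  let K : ℕ → Set (Fin r → ℚ_[p]) := fun n =>
    closedBall 0 1 ∩ {u | (mk ((p : ℚ_[p])⁻¹ • u) : PadicTorusQuot p r) ≠ 0} ∩
      (fun u => (mk (((p : ℚ_[p]) ^ (n + 1))⁻¹ • u) : PadicTorusQuot p r)) ⁻¹' T₀
  have hclosed : ∀ n, IsClosed (K n) := fun n =>
    (isClosed_closedBall.inter
      ((isLocallyConstant_mk_smul _).isOpen_fiber 0).isClosed_compl).inter
      (isOpen_compl_iff.1 (isLocallyConstant_mk_smul _ (T₀ : Set (PadicTorusQuot p r))ᶜ))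
  have hnonempty : ∀ n, (K n).Nonempty := fun n => by
    obtain ⟨u, hu, hu1, hun⟩ := exists_mem_padicLattice_mk_ne_zero_mk_mem hinf n
    exact ⟨u, ⟨mem_closedBall_zero_iff.2 (mem_padicLattice_iff_norm_le_one.1 hu), hu1⟩, hun⟩
  obtain ⟨u, hu⟩ := IsCompact.nonempty_iInter_of_sequence_nonempty_isCompact_isClosed K
    (fun n _ hu => ⟨hu.1, mk_pow_inv_smul_mem_of_succ hu.2⟩) hnonempty
    ((isCompact_closedBall 0 1).of_isClosed_subset (hclosed 0) fun _ hu => hu.1.1) hclosed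
  have huK : ∀ n, u ∈ K n := Set.mem_iInter.1 hu
  refine ⟨u, fun h0 => (huK 0).1.2 (by rw [h0, smul_zero, mk_zero]), fun n => ?_⟩
  exact mk_pow_inv_smul_mem_of_succ (huK n).2

theorem bot_lt_linearCore (hinf : (T₀ : Set (PadicTorusQuot p r)).Infinite) :
    ⊥ < linearCore T₀ := by
  obtain ⟨u, hu0, hu⟩ := exists_ne_zero_forall_mk_pow_inv_smul_mem hinf
  exact bot_lt_iff_ne_bot.2 fun h => hu0 <|
    (Submodule.mem_bot ℚ_[p]).1 (h ▸ mem_linearCore_of_forall_mk_pow_inv_smul_mem hu)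

end linearCore

noncomputable def torusImage (W : Submodule ℚ_[p] (Fin r → ℚ_[p])) :
    AddSubgroup (PadicTorusQuot p r) :=
  W.toAddSubgroup.map (mk' (padicLattice p r))

section torusImage

variable {W : Submodule ℚ_[p] (Fin r → ℚ_[p])}

theorem mk_mem_torusImage {w : Fin r → ℚ_[p]} (hw : w ∈ W) :
    (mk w : PadicTorusQuot p r) ∈ torusImage W :=
  ⟨w, hw, rfl⟩

theorem glActOnTorus_mem_torusImage {g : Matrix.GeneralLinearGroup (Fin r) ℤ_[p]}
    (hg : ∀ v ∈ W, Matrix.mulVec (matrixToPadic p r (g : Matrix (Fin r) (Fin r) ℤ_[p])) v ∈ W)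
    {x : PadicTorusQuot p r} (hx : x ∈ torusImage W) : glActOnTorus p r g x ∈ torusImage W := by
  obtain ⟨w, hw, rfl⟩ := hx
  rw [mk'_apply, glActOnTorus_mk]
  exact mk_mem_torusImage (hg w hw)

/-- A finite image would be killed by its order `e`, forcing `ℚ_p v = e • ℚ_p v ⊆ L`. -/
theorem torusImage_infinite (hW : W ≠ ⊥) :
    (torusImage W : Set (PadicTorusQuot p r)).Infinite := by
  intro hfin
  have : Finite (torusImage W) := hfin.to_subtype
  obtain ⟨v, hvW, hv⟩ := W.exists_mem_ne_zero_of_ne_bot hW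
  set e := Nat.card (torusImage W)
  have he : (e : ℚ_[p]) ≠ 0 := Nat.cast_ne_zero.2 Nat.card_pos.ne'
  refine hv (eq_zero_of_forall_smul_mem_padicLattice fun c => ?_)
  have hkill := congrArg Subtype.val (card_nsmul_eq_zero' (G := torusImage W)
    (x := ⟨mk (((e : ℚ_[p])⁻¹ * c) • v), mk_mem_torusImage (W.smul_mem _ hvW)⟩))
  rw [AddSubgroup.coe_nsmul, ← mk_nsmul, ← Nat.cast_smul_eq_nsmul ℚ_[p], smul_smul,
    mul_inv_cancel_left₀ he] at hkill
  exact (eq_zero_iff _).1 hkill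

theorem torusImage_ne_top (hW : W ≠ ⊤) : torusImage W ≠ ⊤ := by
  contrapose! hW
  refine Submodule.eq_top_iff'.2 fun v => W.closed_of_finiteDimensional.closure_subset <|
    Metric.mem_closure_iff.2 fun ε hε => ?_
  obtain ⟨n, hn⟩ := exists_norm_pow_mul_lt (p := p) 1 hε
  obtain ⟨w, hw, hwv⟩ : (mk (((p : ℚ_[p]) ^ n)⁻¹ • v) : PadicTorusQuot p r) ∈ torusImage W :=
    hW ▸ AddSubgroup.mem_top _
  have hdiff := mem_padicLattice_iff_norm_le_one.1 (eq_iff_sub_mem.1 hwv.symm)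
  refine ⟨(p : ℚ_[p]) ^ n • w, W.smul_mem _ hw, ?_⟩
  have hv : v - (p : ℚ_[p]) ^ n • w = (p : ℚ_[p]) ^ n • (((p : ℚ_[p]) ^ n)⁻¹ • v - w) := by
    rw [smul_sub, smul_smul, mul_inv_cancel₀ (pow_ne_zero n padic_p_ne_zero), one_smul]
  rw [dist_eq_norm, hv, norm_smul]
  calc ‖(p : ℚ_[p]) ^ n‖ * ‖((p : ℚ_[p]) ^ n)⁻¹ • v - w‖ ≤ ‖(p : ℚ_[p]) ^ n‖ * 1 :=
        mul_le_mul_of_nonneg_left hdiff (norm_nonneg _)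
    _ < ε := hn

end torusImage

end PadicTorus

theorem exists_invariant_infinite_proper_subgroup_iff_reducible_general
    (p : ℕ) [Fact p.Prime] (r : ℕ)
    (G : Subgroup (Matrix.GeneralLinearGroup (Fin r) ℤ_[p])) :
    (∃ T₀ : AddSubgroup (PadicTorusQuot p r),
        (∀ g ∈ G, ∀ x ∈ T₀, glActOnTorus p r g x ∈ T₀) ∧
        (T₀ : Set (PadicTorusQuot p r)).Infinite ∧ T₀ ≠ ⊤) ↔
    (∃ W : Submodule ℚ_[p] (Fin r → ℚ_[p]), ⊥ < W ∧ W < ⊤ ∧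
        ∀ g ∈ G, ∀ v ∈ W,
          Matrix.mulVec (matrixToPadic p r (g : Matrix (Fin r) (Fin r) ℤ_[p])) v ∈ W) := by
  constructor
  · rintro ⟨T₀, hinv, hinf, hne⟩
    exact ⟨linearCore T₀, bot_lt_linearCore hinf, lt_top_iff_ne_top.2 (linearCore_ne_top hne),
      fun g hg _ hv => mulVec_mem_linearCore (hinv g hg) hv⟩
  · rintro ⟨W, hbot, htop, hinv⟩
    exact ⟨torusImage W, fun g hg _ hx => glActOnTorus_mem_torusImage (hinv g hg) hx,
      torusImage_infinite hbot.ne', torusImage_ne_top htop.ne⟩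

/-- Let `T = (Fin r → ℚ_[p]) ⧸ (Fin r → ℤ_[p])` with `r ≥ 1`, and let
`G` be a finite subgroup of `GL_r(ℤ_[p])`, acting on `T` as above.  Then `T` has an
infinite proper `G`-invariant subgroup if and only if the `ℚ_[p]`-vector space
`Fin r → ℚ_[p]` has a nontrivial proper `G`-invariant subspace. -/
theorem exists_invariant_infinite_proper_subgroup_iff_reducible
    (p : ℕ) [Fact p.Prime] (r : ℕ) (hr : 1 ≤ r)
    (G : Subgroup (Matrix.GeneralLinearGroup (Fin r) ℤ_[p])) (hG : Finite G) :
    (∃ T₀ : AddSubgroup (PadicTorusQuot p r),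
        (∀ g ∈ G, ∀ x ∈ T₀, glActOnTorus p r g x ∈ T₀) ∧
        (T₀ : Set (PadicTorusQuot p r)).Infinite ∧ T₀ ≠ ⊤) ↔
    (∃ W : Submodule ℚ_[p] (Fin r → ℚ_[p]), ⊥ < W ∧ W < ⊤ ∧
        ∀ g ∈ G, ∀ v ∈ W,
          Matrix.mulVec (matrixToPadic p r (g : Matrix (Fin r) (Fin r) ℤ_[p])) v ∈ W) :=
  exists_invariant_infinite_proper_subgroup_iff_reducible_general p r G
end
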